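/- arXiv:2010.02282 — 2 statements merged into one kernel-verified Lean document; each statement's English description precedes it below -/
import Mathlib

section
/- With the update z^{k+1} = [z^k + β_k g(x^{k+1})]_+, it holds for each i that |z_i^{k+1} g_i(x^{k+1})| ≤ (1/β_k)((z_i^{k+1})² + (z_i^k)²/8), and hence Σ_{i=1}^m |z_i^{k+1} g_i(x^{k+1})| ≤ (1/β_k)(‖z^{k+1}‖² + ‖z^k‖²/8). -/
/-! The update makes `z'ᵢ` and `z'ᵢ - zᵢ - β gᵢ` complementary, so `β z'ᵢ gᵢ = z'ᵢ (z'ᵢ - zᵢ)`.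
For `zᵢ, z'ᵢ ≥ 0` the latter lies in `[-(z'ᵢ² + zᵢ²/8), z'ᵢ²]`: the lower end is the identity
`2 z'² - z z' + z²/8 = 2 (z' - z/4)²`. -/

lemma abs_mul_sub_le_sq_add_sq_div_eight {a b : ℝ} (ha : 0 ≤ a) (hb : 0 ≤ b) :
    |b * (b - a)| ≤ b ^ 2 + a ^ 2 / 8 := by
  rw [abs_le]
  constructor
  · nlinarith [sq_nonneg (b - a / 4)]
  · nlinarith [mul_nonneg ha hb]

lemma mul_mul_eq_mul_sub_of_eq_max {a β g u : ℝ} (hu : u = max (a + β * g) 0) :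
    β * (u * g) = u * (u - a) := by
  rcases le_total (a + β * g) 0 with h | h
  · simp [hu, max_eq_right h]
  · rw [hu, max_eq_left h]
    ring

lemma abs_mul_le_of_eq_max {a β g u : ℝ} (ha : 0 ≤ a) (hβ : 0 < β)
    (hu : u = max (a + β * g) 0) :
    |u * g| ≤ 1 / β * (u ^ 2 + a ^ 2 / 8) := by
  have hu_nonneg : 0 ≤ u := hu ▸ le_max_right _ _
  rw [one_div, le_inv_mul_iff₀ hβ]
  calc β * |u * g| = |β * (u * g)| := by rw [abs_mul β, abs_of_pos hβ]
    _ = |u * (u - a)| := by rw [mul_mul_eq_mul_sub_of_eq_max hu]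
    _ ≤ u ^ 2 + a ^ 2 / 8 := abs_mul_sub_le_sq_add_sq_div_eight ha hu_nonneg

/-- complementarity bound from the augmented Lagrangian multiplier update. -/
theorem stmt_4 {m : ℕ} (z gx : EuclideanSpace ℝ (Fin m)) (β : ℝ) (hβ : 0 < β)
    (hz : ∀ i, 0 ≤ z i)
    (z' : EuclideanSpace ℝ (Fin m)) (hz' : ∀ i, z' i = max (z i + β * gx i) 0) :
    (∀ i, |z' i * gx i| ≤ 1 / β * ((z' i) ^ 2 + (z i) ^ 2 / 8)) ∧
      ∑ i, |z' i * gx i| ≤ 1 / β * (‖z'‖ ^ 2 + ‖z‖ ^ 2 / 8) := by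
  have hcoord i : |z' i * gx i| ≤ 1 / β * ((z' i) ^ 2 + (z i) ^ 2 / 8) :=
    abs_mul_le_of_eq_max (hz i) hβ (hz' i)
  refine ⟨hcoord, ?_⟩
  calc ∑ i, |z' i * gx i| ≤ ∑ i, 1 / β * ((z' i) ^ 2 + (z i) ^ 2 / 8) :=
        Finset.sum_le_sum fun i _ => hcoord i
    _ = 1 / β * (‖z'‖ ^ 2 + ‖z‖ ^ 2 / 8) := by
        rw [EuclideanSpace.real_norm_sq_eq, EuclideanSpace.real_norm_sq_eq, ← Finset.mul_sum,
          Finset.sum_add_distrib, ← Finset.sum_div]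
end

section
/- Let x̄ be the minimizer of φ(x) = F(x) + (β/2)‖[g(x) + z/β]_+‖², where F is convex, g_i convex, z ≥ 0, β > 0, and suppose (x*, z*) is a KKT pair for min{F(x) : g(x) ≤ 0}. Then ‖[g(x̄) + z/β]_+‖ ≤ (2‖z*‖ + ‖z‖)/β. -/
/-!
Minimality of `x̄` compared with the KKT point `x*` gives
`F x̄ + β/2 ‖θ₊(x̄)‖² ≤ F x* + β/2 ‖θ₊(x*)‖²`, and `‖θ₊(x*)‖ ≤ ‖z‖/β` by feasibility of `x*`.
The KKT conditions make `x*` a minimizer of the Lagrangian `F + ⟨z*, g⟩`, so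
`F x* ≤ F x̄ + ⟨z*, g(x̄)⟩ ≤ F x̄ + ‖z*‖ ‖θ₊(x̄)‖` because `g ≤ θ₊` and `z* ≥ 0`.
Hence `s = β ‖θ₊(x̄)‖` satisfies `s² ≤ 2 ‖z*‖ s + ‖z‖²`, which forces `s ≤ 2 ‖z*‖ + ‖z‖`.
-/

def subdiff {n : ℕ} (f : EuclideanSpace ℝ (Fin n) → ℝ) (x : EuclideanSpace ℝ (Fin n)) :
    Set (EuclideanSpace ℝ (Fin n)) :=
  {v | ∀ y, f x + (inner ℝ v (y - x) : ℝ) ≤ f y}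

open Finset AffineMap

open scoped RealInnerProductSpace

theorem ConvexOn.add_fderiv_sub_le {E : Type*} [NormedAddCommGroup E] [NormedSpace ℝ E]
    {s : Set E} {f : E → ℝ} {f' : E →L[ℝ] ℝ} {x y : E} (hf : ConvexOn ℝ s f)
    (hx : x ∈ s) (hy : y ∈ s) (hd : HasFDerivAt f f' x) :
    f x + f' (y - x) ≤ f y := by
  set c : ℝ →ᵃ[ℝ] E := lineMap x y
  have hc0 : c 0 = x := lineMap_apply_zero x y
  have hc1 : c 1 = y := lineMap_apply_one x y
  have hline : ConvexOn ℝ (c ⁻¹' s) (f ∘ c) := hf.comp_affineMap c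
  have hderiv : HasDerivAt (f ∘ c) (f' (y - x)) 0 := by
    rw [← hc0] at hd
    exact hd.comp_hasDerivAt 0 hasDerivAt_lineMap
  have hslope := hline.le_slope_of_hasDerivAt (by simpa [hc0]) (by simpa [hc1]) zero_lt_one hderiv
  simp only [slope_def_field, Function.comp_apply, hc0, hc1, sub_zero, div_one] at hslope
  linarith

theorem ConvexOn.add_inner_gradient_sub_le {E : Type*} [NormedAddCommGroup E]
    [InnerProductSpace ℝ E] [CompleteSpace E] {s : Set E} {f : E → ℝ} {v x y : E}
    (hf : ConvexOn ℝ s f) (hx : x ∈ s) (hy : y ∈ s) (hd : HasGradientAt f v x) :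
    f x + ⟪v, y - x⟫ ≤ f y := by
  simpa using hf.add_fderiv_sub_le hx hy (hasGradientAt_iff_hasFDerivAt.mp hd)

theorem le_add_sum_mul_of_kkt {n : ℕ} {ι : Type*} [Fintype ι]
    {F : EuclideanSpace ℝ (Fin n) → ℝ} {g : ι → EuclideanSpace ℝ (Fin n) → ℝ}
    {gradg : ι → EuclideanSpace ℝ (Fin n)} {μ : ι → ℝ} {v xstar : EuclideanSpace ℝ (Fin n)}
    (hg : ∀ i, ConvexOn ℝ Set.univ (g i)) (hgd : ∀ i, HasGradientAt (g i) (gradg i) xstar)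
    (hv : v ∈ subdiff F xstar) (hstat : v + ∑ i, μ i • gradg i = 0) (hμ : ∀ i, 0 ≤ μ i)
    (hcomp : ∑ i, μ i * g i xstar = 0) (x : EuclideanSpace ℝ (Fin n)) :
    F xstar ≤ F x + ∑ i, μ i * g i x := by
  have hv' : v = -∑ i, μ i • gradg i := eq_neg_of_add_eq_zero_left hstat
  have hgrad : ∀ i, μ i * ⟪gradg i, x - xstar⟫ ≤ μ i * (g i x - g i xstar) := fun i =>
    mul_le_mul_of_nonneg_left
      (by linarith [(hg i).add_inner_gradient_sub_le trivial trivial (y := x) (hgd i)]) (hμ i)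
  calc F xstar = F xstar + ⟪v, x - xstar⟫ + ∑ i, μ i * ⟪gradg i, x - xstar⟫ := by
        simp [hv', inner_neg_left, sum_inner, real_inner_smul_left]
    _ ≤ F x + ∑ i, μ i * (g i x - g i xstar) := add_le_add (hv x) (sum_le_sum fun i _ => hgrad i)
    _ = F x + ∑ i, μ i * g i x := by simp [mul_sub, sum_sub_distrib, hcomp]

theorem sum_mul_le_norm_mul_norm_of_le {ι : Type*} [Fintype ι] {μ w : EuclideanSpace ℝ ι}
    {c : ι → ℝ} (hμ : ∀ i, 0 ≤ μ i) (hc : ∀ i, c i ≤ w i) :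
    ∑ i, μ i * c i ≤ ‖μ‖ * ‖w‖ :=
  calc ∑ i, μ i * c i ≤ ∑ i, μ i * w i :=
        sum_le_sum fun i _ => mul_le_mul_of_nonneg_left (hc i) (hμ i)
    _ = ⟪μ, w⟫ := by simp [PiLp.inner_apply, mul_comm]
    _ ≤ ‖μ‖ * ‖w‖ := real_inner_le_norm _ _

theorem EuclideanSpace.norm_le_norm_of_abs_le {ι : Type*} [Fintype ι]
    {w u : EuclideanSpace ℝ ι} (h : ∀ i, |w i| ≤ |u i|) : ‖w‖ ≤ ‖u‖ := by
  rw [EuclideanSpace.norm_eq, EuclideanSpace.norm_eq]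
  gcongr with i
  simpa only [Real.norm_eq_abs] using h i

theorem le_two_mul_add_of_sq_le {a b s : ℝ} (ha : 0 ≤ a) (hb : 0 ≤ b)
    (h : s ^ 2 ≤ 2 * a * s + b ^ 2) : s ≤ 2 * a + b := by
  nlinarith

theorem stmt_6_general {n m : ℕ} (F : EuclideanSpace ℝ (Fin n) → ℝ)
    (g : Fin m → EuclideanSpace ℝ (Fin n) → ℝ)
    (gradg : Fin m → EuclideanSpace ℝ (Fin n) → EuclideanSpace ℝ (Fin n))
    (hg : ∀ i, ConvexOn ℝ Set.univ (g i))
    (hgd : ∀ i x, HasGradientAt (g i) (gradg i x) x)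
    (z : EuclideanSpace ℝ (Fin m)) (hz : ∀ i, 0 ≤ z i) (β : ℝ) (hβ : 0 < β)
    (θp : EuclideanSpace ℝ (Fin n) → EuclideanSpace ℝ (Fin m))
    (hθp : ∀ x i, θp x i = max (g i x + z i / β) 0)
    (φ : EuclideanSpace ℝ (Fin n) → ℝ)
    (hφ : ∀ x, φ x = F x + β / 2 * ‖θp x‖ ^ 2)
    (xbar : EuclideanSpace ℝ (Fin n)) (hxbar : ∀ x, φ xbar ≤ φ x)
    (xstar : EuclideanSpace ℝ (Fin n)) (zstar : EuclideanSpace ℝ (Fin m))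
    (hstat : ∃ v ∈ subdiff F xstar, v + ∑ i, zstar i • gradg i xstar = 0)
    (hzspos : ∀ i, 0 ≤ zstar i)
    (hfeas : ∀ i, g i xstar ≤ 0)
    (hcomp : ∑ i, zstar i * g i xstar = 0) :
    ‖θp xbar‖ ≤ (2 * ‖zstar‖ + ‖z‖) / β := by
  obtain ⟨v, hv, hveq⟩ := hstat
  have hshift : ∀ i, 0 ≤ z i / β := fun i => div_nonneg (hz i) hβ.le
  have hlag : F xstar ≤ F xbar + ∑ i, zstar i * g i xbar :=
    le_add_sum_mul_of_kkt hg (fun i => hgd i xstar) hv hveq hzspos hcomp xbar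
  have hpair : ∑ i, zstar i * g i xbar ≤ ‖zstar‖ * ‖θp xbar‖ :=
    sum_mul_le_norm_mul_norm_of_le hzspos fun i => by
      rw [hθp]; exact (le_add_of_nonneg_right (hshift i)).trans (le_max_left _ _)
  have hstar : β * ‖θp xstar‖ ≤ ‖z‖ := by
    have : ‖θp xstar‖ ≤ ‖β⁻¹ • z‖ := EuclideanSpace.norm_le_norm_of_abs_le fun i => by
      rw [hθp, PiLp.smul_apply, smul_eq_mul, inv_mul_eq_div, abs_of_nonneg (le_max_right _ _),
        abs_of_nonneg (hshift i)]
      exact max_le (by linarith [hfeas i]) (hshift i)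
    rw [norm_smul, Real.norm_eq_abs, abs_inv, abs_of_pos hβ] at this
    exact (le_inv_mul_iff₀ hβ).mp this
  have hmin := hxbar xstar
  rw [hφ, hφ] at hmin
  have key : (β * ‖θp xbar‖) ^ 2 ≤ 2 * ‖zstar‖ * (β * ‖θp xbar‖) + ‖z‖ ^ 2 := by
    nlinarith [pow_le_pow_left₀ (by positivity) hstar 2]
  rw [le_div_iff₀ hβ, mul_comm]
  exact le_two_mul_add_of_sq_le (norm_nonneg _) (norm_nonneg _) key

/-- bound on the residual `‖[g(x̄)+z/β]_+‖` at the AL minimizer. -/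
theorem stmt_6 {n m : ℕ} (F : EuclideanSpace ℝ (Fin n) → ℝ)
    (g : Fin m → EuclideanSpace ℝ (Fin n) → ℝ)
    (gradg : Fin m → EuclideanSpace ℝ (Fin n) → EuclideanSpace ℝ (Fin n))
    (hF : ConvexOn ℝ Set.univ F)
    (hg : ∀ i, ConvexOn ℝ Set.univ (g i))
    (hgd : ∀ i x, HasGradientAt (g i) (gradg i x) x)
    (z : EuclideanSpace ℝ (Fin m)) (hz : ∀ i, 0 ≤ z i) (β : ℝ) (hβ : 0 < β)
    (θp : EuclideanSpace ℝ (Fin n) → EuclideanSpace ℝ (Fin m))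
    (hθp : ∀ x i, θp x i = max (g i x + z i / β) 0)
    (φ : EuclideanSpace ℝ (Fin n) → ℝ)
    (hφ : ∀ x, φ x = F x + β / 2 * ‖θp x‖ ^ 2)
    (xbar : EuclideanSpace ℝ (Fin n)) (hxbar : ∀ x, φ xbar ≤ φ x)
    (xstar : EuclideanSpace ℝ (Fin n)) (zstar : EuclideanSpace ℝ (Fin m))
    (hstat : ∃ v ∈ subdiff F xstar, v + ∑ i, zstar i • gradg i xstar = 0)
    (hzspos : ∀ i, 0 ≤ zstar i)
    (hfeas : ∀ i, g i xstar ≤ 0)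
    (hcomp : ∑ i, zstar i * g i xstar = 0) :
    ‖θp xbar‖ ≤ (2 * ‖zstar‖ + ‖z‖) / β :=
  stmt_6_general F g gradg hg hgd z hz β hβ θp hθp φ hφ xbar hxbar xstar zstar hstat hzspos hfeas
    hcomp
end
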